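/- If q ∈ ℂ[a_1, …, a_n, y_1, …, y_m] is invariant under the W(B_n)-action and vanishes at every point of the affine hyperplane {(a, y) : a_1 = 1/2 − ν(y)}, then q is divisible by φ_ν := ∏_{i=1}^n (ν − 1/2 + a_i)(ν − 1/2 − a_i). In particular, φ_ν is, up to a nonzero scalar, the unique W(B_n)-invariant polynomial of minimal degree vanishing on that hyperplane. -/

import Mathlib

open MvPolynomial

/-- The action of a signed permutation (an element of the hyperoctahedral group `W(Bₙ)`)
on `ℂ[a₁, …, aₙ, y₁, …, y_m]`: it permutes the variables `a_i` and changes their signs,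
fixing the variables `y_j`.  Here `σ` is the permutation and `ε` the tuple of signs. -/
noncomputable def bAct {n m : ℕ} (σ : Equiv.Perm (Fin n)) (ε : Fin n → ℂ)
    (q : MvPolynomial (Fin n ⊕ Fin m) ℂ) : MvPolynomial (Fin n ⊕ Fin m) ℂ :=
  MvPolynomial.aeval
    (Sum.elim (fun i => MvPolynomial.C (ε i) * MvPolynomial.X (Sum.inl (σ i)))
      (fun j => MvPolynomial.X (Sum.inr j))) q

/-- A polynomial in `ℂ[a₁, …, aₙ, y₁, …, y_m]` is `W(Bₙ)`-invariant if it is fixed by all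
signed permutations of the `a`-variables. -/
def IsBnInvariant {n m : ℕ} (q : MvPolynomial (Fin n ⊕ Fin m) ℂ) : Prop :=
  ∀ σ : Equiv.Perm (Fin n), ∀ ε : Fin n → ℂ, (∀ i, ε i = 1 ∨ ε i = -1) → bAct σ ε q = q

/-- `φ_ν := ∏_{i=1}^n (ν − 1/2 + a_i)(ν − 1/2 − a_i)`. -/
noncomputable def phiNu {n m : ℕ} (ν : MvPolynomial (Fin m) ℂ) :
    MvPolynomial (Fin n ⊕ Fin m) ℂ :=
  ∏ i : Fin n,
    ((MvPolynomial.rename Sum.inr ν - MvPolynomial.C (1/2) + MvPolynomial.X (Sum.inl i)) *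
      (MvPolynomial.rename Sum.inr ν - MvPolynomial.C (1/2) - MvPolynomial.X (Sum.inl i)))

/-- `q` vanishes on the affine hyperplane `{(a, y) : a₁ = 1/2 − ν(y)}`. -/
def VanishesOnHyperplane {n m : ℕ} (hn : 1 ≤ n) (ν : MvPolynomial (Fin m) ℂ)
    (q : MvPolynomial (Fin n ⊕ Fin m) ℂ) : Prop :=
  ∀ (a : Fin n → ℂ) (y : Fin m → ℂ), a ⟨0, hn⟩ = 1/2 - MvPolynomial.eval y ν →
    MvPolynomial.eval (Sum.elim a y) q = 0

/-!
The polynomial `φ_ν` is, up to sign, the product of the `2n` linear forms `aᵢ ∓ μ(y)` with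
`μ = 1/2 - ν`. A linear form `aᵢ - c(y)` is prime: it divides `q` exactly when the substitution
`aᵢ ↦ c(y)` kills `q`, i.e. (over the infinite field `ℂ`) when `q` vanishes on the hyperplane
`aᵢ = c(y)`. A `W(Bₙ)`-invariant `q` vanishing on `a₁ = μ(y)` vanishes on all the hyperplanes
`aᵢ = ±μ(y)`, so it is divisible by all `2n` linear forms, which are pairwise non-associated
since `μ ≠ -μ`. Hence `φ_ν ∣ q`, and comparing total degrees gives the uniqueness statement.
-/

section HyperplaneSubstitution

variable {R σ τ : Type*} [CommRing R] [DecidableEq σ]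

/-- The substitution `aᵢ ↦ c(y)` on `R[a, y]`. -/
noncomputable def hyperplaneSubst (i : σ) (c : MvPolynomial τ R) :
    MvPolynomial (σ ⊕ τ) R →ₐ[R] MvPolynomial (σ ⊕ τ) R :=
  aeval (Sum.elim (Function.update (X ∘ Sum.inl) i (rename Sum.inr c)) (X ∘ Sum.inr))

variable (i : σ) (c : MvPolynomial τ R)

lemma hyperplaneSubst_rename (w : MvPolynomial τ R) :
    hyperplaneSubst i c (rename Sum.inr w) = rename Sum.inr w := by
  rw [hyperplaneSubst, aeval_rename, Sum.elim_comp_inr, rename_eq_aeval]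

lemma hyperplaneSubst_X_inl_self : hyperplaneSubst i c (X (Sum.inl i)) = rename Sum.inr c := by
  simp [hyperplaneSubst]

lemma hyperplaneSubst_X_of_ne {s : σ ⊕ τ} (h : s ≠ Sum.inl i) :
    hyperplaneSubst i c (X s) = X s := by
  rcases s with j | j
  · simp_all [hyperplaneSubst]
  · simp [hyperplaneSubst]

lemma X_inl_sub_rename_dvd_sub_hyperplaneSubst (q : MvPolynomial (σ ⊕ τ) R) :
    X (Sum.inl i) - rename Sum.inr c ∣ q - hyperplaneSubst i c q := by
  let I := Ideal.span {(X (Sum.inl i) - rename Sum.inr c : MvPolynomial (σ ⊕ τ) R)}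
  have hcomp :
      (Ideal.Quotient.mkₐ R I).comp (hyperplaneSubst i c) = Ideal.Quotient.mkₐ R I := by
    refine algHom_ext fun s => ?_
    by_cases hs : s = Sum.inl i
    · subst hs
      simp only [AlgHom.comp_apply, hyperplaneSubst_X_inl_self, Ideal.Quotient.mkₐ_eq_mk]
      exact (Ideal.Quotient.mk_eq_mk_iff_sub_mem _ _).2
        (Ideal.mem_span_singleton.2 (dvd_sub_comm.1 dvd_rfl))
    · simp only [AlgHom.comp_apply, hyperplaneSubst_X_of_ne i c hs]
  rw [← Ideal.mem_span_singleton, ← Ideal.Quotient.mk_eq_mk_iff_sub_mem]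
  exact (DFunLike.congr_fun hcomp q).symm

lemma X_inl_sub_rename_dvd_iff (q : MvPolynomial (σ ⊕ τ) R) :
    X (Sum.inl i) - rename Sum.inr c ∣ q ↔ hyperplaneSubst i c q = 0 := by
  constructor
  · rintro ⟨r, rfl⟩
    rw [map_mul, map_sub, hyperplaneSubst_X_inl_self, hyperplaneSubst_rename, sub_self, zero_mul]
  · intro h
    simpa [h] using X_inl_sub_rename_dvd_sub_hyperplaneSubst i c q

lemma X_inl_sub_rename_ne_zero [Nontrivial R] :
    (X (Sum.inl i) - rename Sum.inr c : MvPolynomial (σ ⊕ τ) R) ≠ 0 := by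
  intro h
  have := congrArg (hyperplaneSubst i (c + 1)) h
  rw [map_sub, hyperplaneSubst_X_inl_self, hyperplaneSubst_rename, map_add, map_one,
    add_sub_cancel_left, map_zero] at this
  exact one_ne_zero this

lemma prime_X_inl_sub_rename [IsDomain R] :
    Prime (X (Sum.inl i) - rename Sum.inr c : MvPolynomial (σ ⊕ τ) R) := by
  refine ⟨X_inl_sub_rename_ne_zero i c, fun hunit => ?_, fun a b hab => ?_⟩
  · simpa using (X_inl_sub_rename_dvd_iff i c 1).1 hunit.dvd
  · simpa only [X_inl_sub_rename_dvd_iff, map_mul, mul_eq_zero] using hab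

lemma not_X_inl_sub_rename_dvd [Nontrivial R] {j : σ} {c' : MvPolynomial τ R}
    (h : (i, c) ≠ (j, c')) :
    ¬X (Sum.inl i) - rename Sum.inr c ∣
      (X (Sum.inl j) - rename Sum.inr c' : MvPolynomial (σ ⊕ τ) R) := by
  rw [X_inl_sub_rename_dvd_iff, map_sub, hyperplaneSubst_rename]
  by_cases hij : j = i
  · subst hij
    rw [hyperplaneSubst_X_inl_self, sub_eq_zero, (rename_injective _ Sum.inr_injective).eq_iff]
    exact fun hc => h (by rw [hc])
  · rw [hyperplaneSubst_X_of_ne i c (by simpa using hij)]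
    exact X_inl_sub_rename_ne_zero j c'

lemma eval_hyperplaneSubst (x : σ ⊕ τ → R) (q : MvPolynomial (σ ⊕ τ) R) :
    eval x (hyperplaneSubst i c q)
      = eval (Sum.elim (Function.update (x ∘ Sum.inl) i (eval (x ∘ Sum.inr) c)) (x ∘ Sum.inr))
          q := by
  rw [hyperplaneSubst, aeval_eq_bind₁, eval, eval₂Hom_bind₁]
  congr 2
  funext j
  rcases j with j | j
  · by_cases hj : j = i
    · subst hj
      simp [eval_rename]
    · simp [hj]
  · simp

lemma hyperplaneSubst_eq_zero_iff [IsDomain R] [Infinite R] (q : MvPolynomial (σ ⊕ τ) R) :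
    hyperplaneSubst i c q = 0 ↔
      ∀ (a : σ → R) (y : τ → R), a i = eval y c → eval (Sum.elim a y) q = 0 := by
  constructor
  · intro h a y hay
    simpa [eval_hyperplaneSubst, ← hay] using congrArg (eval (Sum.elim a y)) h
  · intro h
    refine MvPolynomial.funext fun x => ?_
    rw [eval_hyperplaneSubst, map_zero]
    exact h _ _ (by simp)

end HyperplaneSubstitution

lemma eq_C_mul_of_dvd_of_totalDegree_le {R σ : Type*} [CommRing R] [IsDomain R]
    {p q : MvPolynomial σ R} (hpq : p ∣ q) (hq : q ≠ 0)
    (hdeg : q.totalDegree ≤ p.totalDegree) :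
    ∃ c : R, c ≠ 0 ∧ q = C c * p := by
  obtain ⟨r, rfl⟩ := hpq
  have hr : r ≠ 0 := right_ne_zero_of_mul hq
  rw [totalDegree_mul_of_isDomain (left_ne_zero_of_mul hq) hr] at hdeg
  have hrC : r = C (r.coeff 0) := totalDegree_eq_zero_iff_eq_C.1 (by omega)
  exact ⟨r.coeff 0, fun h => hr (by rw [hrC, h, C_0]), by rw [mul_comm, ← hrC]⟩

section Hyperoctahedral

variable {n m : ℕ}

lemma eval_bAct (π : Equiv.Perm (Fin n)) (ε : Fin n → ℂ) (x : Fin n ⊕ Fin m → ℂ)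
    (q : MvPolynomial (Fin n ⊕ Fin m) ℂ) :
    eval x (bAct π ε q)
      = eval (Sum.elim (fun i => ε i * x (Sum.inl (π i))) (x ∘ Sum.inr)) q := by
  rw [bAct, aeval_eq_bind₁, eval, eval₂Hom_bind₁]
  congr 2
  funext j
  rcases j with j | j <;> simp

lemma IsBnInvariant.eval_eq_zero_of_vanishesOnHyperplane {hn : 1 ≤ n}
    {ν : MvPolynomial (Fin m) ℂ} {q : MvPolynomial (Fin n ⊕ Fin m) ℂ}
    (hinv : IsBnInvariant q) (hvan : VanishesOnHyperplane hn ν q) (i : Fin n) {s : ℂ} (hs : s = 1 ∨ s = -1)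
    (a : Fin n → ℂ) (y : Fin m → ℂ) (hay : a i = s * (1/2 - eval y ν)) :
    eval (Sum.elim a y) q = 0 := by
  rw [← hinv (Equiv.swap ⟨0, hn⟩ i) (fun _ => s) (fun _ => hs), eval_bAct, Sum.elim_comp_inr]
  apply hvan
  have hs2 : s * s = 1 := by rcases hs with rfl | rfl <;> norm_num
  simp [hay, ← mul_assoc, hs2]

lemma X_inl_sub_rename_dvd_of_isBnInvariant {hn : 1 ≤ n} {ν : MvPolynomial (Fin m) ℂ}
    {q : MvPolynomial (Fin n ⊕ Fin m) ℂ} (hinv : IsBnInvariant q)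
    (hvan : VanishesOnHyperplane hn ν q) (i : Fin n) {c : MvPolynomial (Fin m) ℂ}
    (hc : c = C (1/2) - ν ∨ c = -(C (1/2) - ν)) :
    X (Sum.inl i) - rename Sum.inr c ∣ q := by
  rw [X_inl_sub_rename_dvd_iff, hyperplaneSubst_eq_zero_iff]
  intro a y hay
  rcases hc with rfl | rfl
  · exact hinv.eval_eq_zero_of_vanishesOnHyperplane hvan i (Or.inl rfl) a y (by simpa using hay)
  · exact hinv.eval_eq_zero_of_vanishesOnHyperplane hvan i (Or.inr rfl) a y (by simpa using hay)

lemma phiNu_eq_neg_one_pow_mul_prod (ν : MvPolynomial (Fin m) ℂ) :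
    phiNu (n := n) ν = (-1) ^ n * ∏ i, ((X (Sum.inl i) - rename Sum.inr (C (1/2) - ν)) *
      (X (Sum.inl i) - rename Sum.inr (-(C (1/2) - ν)))) := by
  have hsign := Finset.prod_neg (s := Finset.univ) fun i : Fin n =>
    (X (Sum.inl i) - rename Sum.inr (C (1/2) - ν)) *
      (X (Sum.inl i) - rename Sum.inr (-(C (1/2) - ν)) : MvPolynomial (Fin n ⊕ Fin m) ℂ)
  rw [Finset.card_univ, Fintype.card_fin] at hsign
  rw [phiNu, ← hsign]
  refine Finset.prod_congr rfl fun i _ => ?_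
  simp only [map_sub, map_neg, rename_C]
  ring

theorem phiNu_dvd_of_isBnInvariant {hn : 1 ≤ n} {ν : MvPolynomial (Fin m) ℂ}
    (hν : ν ≠ C (1/2)) {q : MvPolynomial (Fin n ⊕ Fin m) ℂ} (hinv : IsBnInvariant q)
    (hvan : VanishesOnHyperplane hn ν q) : phiNu ν ∣ q := by
  classical
  set μ : MvPolynomial (Fin m) ℂ := C (1/2) - ν
  let ℓ : Fin n × MvPolynomial (Fin m) ℂ → MvPolynomial (Fin n ⊕ Fin m) ℂ :=
    fun p => X (Sum.inl p.1) - rename Sum.inr p.2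
  have hμ : μ ≠ -μ := self_ne_neg.2 (sub_ne_zero.2 hν.symm)
  have hprod : ∏ i, ((X (Sum.inl i) - rename Sum.inr μ) * (X (Sum.inl i) - rename Sum.inr (-μ)))
      = ∏ p ∈ Finset.univ ×ˢ {μ, -μ}, ℓ p := by
    simp only [Finset.prod_product, Finset.prod_pair hμ, ℓ]
  rw [phiNu_eq_neg_one_pow_mul_prod, (isUnit_neg_one.pow n).mul_left_dvd, hprod]
  refine Finset.prod_dvd_of_isRelPrime (fun p _ p' _ hpp' => ?_) (fun p hp => ?_)
  · exact (prime_X_inl_sub_rename p.1 p.2).irreducible.isRelPrime_iff_not_dvd.2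
      (not_X_inl_sub_rename_dvd p.1 p.2 hpp')
  · simp only [Finset.mem_product, Finset.mem_insert, Finset.mem_singleton] at hp
    exact X_inl_sub_rename_dvd_of_isBnInvariant hinv hvan p.1 hp.2

lemma eval_phiNu (ν : MvPolynomial (Fin m) ℂ) (x : Fin n ⊕ Fin m → ℂ) :
    eval x (phiNu ν) = ∏ i, ((eval (x ∘ Sum.inr) ν - 1/2) ^ 2 - x (Sum.inl i) ^ 2) := by
  rw [phiNu, map_prod]
  refine Finset.prod_congr rfl fun i _ => ?_
  simp only [map_mul, map_add, map_sub, eval_rename, eval_C, eval_X]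
  ring

lemma isBnInvariant_phiNu (ν : MvPolynomial (Fin m) ℂ) : IsBnInvariant (phiNu (n := n) ν) := by
  intro π ε hε
  have hε2 : ∀ i, ε i ^ 2 = 1 := fun i => by rcases hε i with h | h <;> simp [h]
  refine MvPolynomial.funext fun x => ?_
  simp only [eval_bAct, eval_phiNu, Sum.elim_comp_inr, Sum.elim_inl, mul_pow, hε2, one_mul]
  exact Equiv.prod_comp π fun i => (eval (x ∘ Sum.inr) ν - 1/2) ^ 2 - x (Sum.inl i) ^ 2

lemma vanishesOnHyperplane_phiNu (hn : 1 ≤ n) (ν : MvPolynomial (Fin m) ℂ) :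
    VanishesOnHyperplane hn ν (phiNu (n := n) ν) := by
  intro a y hay
  rw [eval_phiNu]
  refine Finset.prod_eq_zero (Finset.mem_univ ⟨0, hn⟩) ?_
  rw [Sum.elim_comp_inr, Sum.elim_inl, hay]
  ring

end Hyperoctahedral

theorem statement13_general (n m : ℕ) (hn : 1 ≤ n)
    (ν : MvPolynomial (Fin m) ℂ)
    (hν : ν ≠ MvPolynomial.C (1/2))
    (q : MvPolynomial (Fin n ⊕ Fin m) ℂ)
    (hinv : IsBnInvariant q) (hvan : VanishesOnHyperplane hn ν q) :
    (phiNu ν ∣ q) ∧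
    IsBnInvariant (phiNu (n := n) ν) ∧ VanishesOnHyperplane hn ν (phiNu ν) ∧
    (∀ q' : MvPolynomial (Fin n ⊕ Fin m) ℂ, IsBnInvariant q' →
      VanishesOnHyperplane hn ν q' → q' ≠ 0 →
      q'.totalDegree ≤ (phiNu (n := n) ν).totalDegree →
      ∃ c : ℂ, c ≠ 0 ∧ q' = MvPolynomial.C c * phiNu ν) :=
  ⟨phiNu_dvd_of_isBnInvariant hν hinv hvan, isBnInvariant_phiNu ν,
    vanishesOnHyperplane_phiNu hn ν,
    fun _ hinv' hvan' hq' hdeg' =>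
      eq_C_mul_of_dvd_of_totalDegree_le (phiNu_dvd_of_isBnInvariant hν hinv' hvan') hq' hdeg'⟩

/-- let `ν ∈ ℂ[y₁,…,y_m]` have degree at most `1` and `ν ≠ 1/2`.  If
`q ∈ ℂ[a₁,…,aₙ,y₁,…,y_m]` is `W(Bₙ)`-invariant and vanishes on the affine hyperplane
`{a₁ = 1/2 − ν(y)}`, then `φ_ν ∣ q`.  In particular `φ_ν` is, up to a nonzero scalar, the
unique `W(Bₙ)`-invariant polynomial of minimal degree vanishing on that hyperplane. -/
theorem statement13 (n m : ℕ) (hn : 1 ≤ n)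
    (ν : MvPolynomial (Fin m) ℂ) (hdeg : ν.totalDegree ≤ 1)
    (hν : ν ≠ MvPolynomial.C (1/2))
    (q : MvPolynomial (Fin n ⊕ Fin m) ℂ)
    (hinv : IsBnInvariant q) (hvan : VanishesOnHyperplane hn ν q) :
    (phiNu ν ∣ q) ∧
    IsBnInvariant (phiNu (n := n) ν) ∧ VanishesOnHyperplane hn ν (phiNu ν) ∧
    (∀ q' : MvPolynomial (Fin n ⊕ Fin m) ℂ, IsBnInvariant q' →
      VanishesOnHyperplane hn ν q' → q' ≠ 0 →
      q'.totalDegree ≤ (phiNu (n := n) ν).totalDegree →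
      ∃ c : ℂ, c ≠ 0 ∧ q' = MvPolynomial.C c * phiNu ν) :=
  statement13_general n m hn ν hν q hinv hvan
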